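/- arXiv:0912.3206 — 6 statements merged into one kernel-verified Lean document; each statement's English description precedes it below -/
import Mathlib

section
/- The unique positive root ζ_c of ζ = 5/2 - (1/2)e^{-2ζ} satisfies 2.4966 < ζ_c < 2.4967, and in particular ζ_c < 5/2. -/
/-! With `t = 2ζ` the defining equation reads `t + exp (-t) = 5`, and `t ↦ t + exp (-t)` is
monotone on `[0, ∞)`. So the bounds on `ζ_c` reduce to comparing `t + exp (-t)` with `5` at
`t = 4.9932` and `t = 4.9934`, which follows from `2.7182818283 < e < 2.7182818286`. -/

open Real Set

lemma monotoneOn_add_exp_neg : MonotoneOn (fun t : ℝ => t + exp (-t)) (Ici 0) := by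
  intro a ha b _ hab
  have hsplit : exp (-b) = exp (-a) * exp (-(b - a)) := by rw [← exp_add]; ring_nf
  have htangent : 1 - (b - a) ≤ exp (-(b - a)) := by linarith [add_one_le_exp (-(b - a))]
  have hle_one : exp (-a) ≤ 1 := exp_le_one_iff.mpr (neg_nonpos.mpr ha)
  nlinarith [mul_le_mul_of_nonneg_left htangent (exp_pos (-a)).le]

lemma add_exp_neg_lt_five : (4.9932 : ℝ) + exp (-4.9932) < 5 := by
  have hinv : exp (-4.9932) * exp 4.9932 = 1 := by rw [← exp_add]; norm_num
  have hsplit : exp 4.9932 = exp 1 ^ 5 * exp (-0.0068) := by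
    rw [← exp_nat_mul, ← exp_add]; norm_num
  have htangent : (0.9932 : ℝ) ≤ exp (-0.0068) := by linarith [add_one_le_exp (-0.0068 : ℝ)]
  have he : (2.7182818283 : ℝ) ^ 5 < exp 1 ^ 5 := by gcongr; exact exp_one_gt_d9
  have hbig : 1 < 0.0068 * exp 4.9932 := by
    rw [hsplit]; nlinarith [pow_pos (exp_pos 1) 5]
  nlinarith [exp_pos (-4.9932)]

lemma five_lt_add_exp_neg : (5 : ℝ) < 4.9934 + exp (-4.9934) := by
  have hinv : exp (-4.9934) * exp 4.9934 = 1 := by rw [← exp_add]; norm_num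
  have hsmall : exp 4.9934 < 2.7182818286 ^ 5 :=
    calc exp 4.9934 < exp 5 := exp_lt_exp.mpr (by norm_num)
      _ = exp 1 ^ 5 := by rw [← exp_nat_mul]; norm_num
      _ < 2.7182818286 ^ 5 := by gcongr; exact exp_one_lt_d9
  nlinarith [exp_pos (-4.9934)]

/-- The unique positive root ζ_c of ζ = 5/2 - (1/2)e^{-2ζ} satisfies
2.4966 < ζ_c < 2.4967, and in particular ζ_c < 5/2. -/
theorem bracelet_threshold_bounds (ζc : ℝ)
    (h : 0 < ζc ∧ ζc = 5/2 - (1/2) * Real.exp (-2 * ζc)) :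
    2.4966 < ζc ∧ ζc < 2.4967 ∧ ζc < 5/2 := by
  obtain ⟨hpos, hfix⟩ := h
  have hroot : 2 * ζc + exp (-(2 * ζc)) = 5 := by rw [← neg_mul]; linarith
  have hmem : 2 * ζc ∈ Ici (0 : ℝ) := mem_Ici.mpr (by positivity)
  have hlower : 4.9932 < 2 * ζc :=
    monotoneOn_add_exp_neg.reflect_lt (by norm_num) hmem (by linarith [add_exp_neg_lt_five])
  have hupper : 2 * ζc < 4.9934 :=
    monotoneOn_add_exp_neg.reflect_lt hmem (by norm_num) (by linarith [five_lt_add_exp_neg])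
  exact ⟨by linarith, by linarith, by linarith [exp_pos (-2 * ζc)]⟩
end

section
/- The function ρ(λ) = min(λ, (5 - e^{-2λ})/2) is continuous and strictly increasing on [0,∞), but not differentiable at λ = ζ_c, the unique positive root of ζ = 5/2 - (1/2)e^{-2ζ}: the left derivative at ζ_c equals 1 while the right derivative equals e^{-2ζ_c} < 1. -/
/-!
Below the fixed point `ζc` of `g(λ) = (5 - e^{-2λ})/2` one has `λ ≤ g(λ)`, above it `g(λ) ≤ λ`,
because `g(λ) - λ` has derivative `e^{-2λ} - 1 ≤ 0` on `[0, ∞)`. Hence `ρ` coincides with the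
identity to the left of `ζc` and with `g` to the right, so its one-sided derivatives there are
`1` and `g'(ζc) = e^{-2ζc} < 1`; both branches are continuous and strictly increasing.
-/

open Real Set Filter Topology

theorem not_differentiableAt_of_hasDerivWithinAt_Iic_Ici {F : Type*} [NormedAddCommGroup F]
    [NormedSpace ℝ F] {f : ℝ → F} {a b : F} {x : ℝ} (ha : HasDerivWithinAt f a (Iic x) x)
    (hb : HasDerivWithinAt f b (Ici x) x) (hab : a ≠ b) : ¬ DifferentiableAt ℝ f x := by
  intro hf
  have hleft : deriv f x = a :=
    (hf.hasDerivAt.hasDerivWithinAt.derivWithin (uniqueDiffWithinAt_Iic x)).symm.trans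
      (ha.derivWithin (uniqueDiffWithinAt_Iic x))
  have hright : deriv f x = b :=
    (hf.hasDerivAt.hasDerivWithinAt.derivWithin (uniqueDiffWithinAt_Ici x)).symm.trans
      (hb.derivWithin (uniqueDiffWithinAt_Ici x))
  exact hab (hleft.symm.trans hright)

theorem HasDerivWithinAt.min_of_eventually_le {f g : ℝ → ℝ} {f' x : ℝ} {s : Set ℝ}
    (hf : HasDerivWithinAt f f' s x) (hfg : ∀ᶠ y in 𝓝[s] x, f y ≤ g y) (hx : f x ≤ g x) :
    HasDerivWithinAt (fun y => min (f y) (g y)) f' s x :=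
  hf.congr_of_eventuallyEq (hfg.mono fun _ => min_eq_left) (min_eq_left hx)

theorem HasDerivWithinAt.min_of_eventually_ge {f g : ℝ → ℝ} {g' x : ℝ} {s : Set ℝ}
    (hg : HasDerivWithinAt g g' s x) (hgf : ∀ᶠ y in 𝓝[s] x, g y ≤ f y) (hx : g x ≤ f x) :
    HasDerivWithinAt (fun y => min (f y) (g y)) g' s x := by
  simpa only [min_comm (g _)] using hg.min_of_eventually_le (f := g) (g := f) hgf hx

/-- The final density above the threshold; below it the sandpile stabilizes and `ρ(λ) = λ`. -/
noncomputable def supercriticalDensity (x : ℝ) : ℝ := (5 - exp (-2 * x)) / 2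

theorem hasDerivAt_supercriticalDensity (x : ℝ) :
    HasDerivAt supercriticalDensity (exp (-2 * x)) x := by
  have hexp : HasDerivAt (fun y => exp (-2 * y)) (exp (-2 * x) * (-2)) x := by
    simpa using ((hasDerivAt_id x).const_mul (-2)).exp
  exact (((hasDerivAt_const x (5 : ℝ)).sub hexp).div_const 2).congr_deriv (by ring)

theorem continuous_supercriticalDensity : Continuous supercriticalDensity := by
  unfold supercriticalDensity
  fun_prop

theorem strictMono_supercriticalDensity : StrictMono supercriticalDensity := by
  intro x y hxy
  have : exp (-2 * y) < exp (-2 * x) := exp_lt_exp.2 (by linarith)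
  unfold supercriticalDensity
  linarith

theorem antitoneOn_supercriticalDensity_sub_id :
    AntitoneOn (fun x => supercriticalDensity x - x) (Ici 0) := by
  refine antitoneOn_of_hasDerivWithinAt_nonpos (convex_Ici 0)
    (continuous_supercriticalDensity.sub continuous_id).continuousOn
    (fun x _ => ((hasDerivAt_supercriticalDensity x).sub (hasDerivAt_id x)).hasDerivWithinAt)
    fun x hx => ?_
  rw [interior_Ici] at hx
  simpa using exp_le_one_iff.2 (by linarith [mem_Ioi.1 hx] : -2 * x ≤ 0)

theorem le_supercriticalDensity {ζ x : ℝ} (hζ : supercriticalDensity ζ = ζ) (hx : 0 ≤ x)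
    (hxζ : x ≤ ζ) : x ≤ supercriticalDensity x := by
  have := antitoneOn_supercriticalDensity_sub_id hx (hx.trans hxζ) hxζ
  simp only [hζ] at this
  linarith

theorem supercriticalDensity_le {ζ x : ℝ} (hζ : supercriticalDensity ζ = ζ) (hζ₀ : 0 ≤ ζ)
    (hζx : ζ ≤ x) : supercriticalDensity x ≤ x := by
  have := antitoneOn_supercriticalDensity_sub_id hζ₀ (hζ₀.trans hζx) hζx
  simp only [hζ] at this
  linarith

/-- ρ(λ) = min(λ, (5 - e^{-2λ})/2) is continuous and strictly increasing on [0,∞),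
but not differentiable at ζ_c (the unique positive root of ζ = 5/2 - (1/2)e^{-2ζ}):
the left derivative at ζ_c is 1 and the right derivative is e^{-2ζ_c} < 1. -/
theorem bracelet_second_order_transition (ζc : ℝ)
    (hζc : 0 < ζc ∧ ζc = 5/2 - (1/2) * Real.exp (-2 * ζc))
    (ρ : ℝ → ℝ) (hρ : ∀ lam : ℝ, ρ lam = min lam ((5 - Real.exp (-2 * lam)) / 2)) :
    ContinuousOn ρ (Set.Ici 0) ∧
    StrictMonoOn ρ (Set.Ici 0) ∧
    ¬ DifferentiableAt ℝ ρ ζc ∧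
    HasDerivWithinAt ρ 1 (Set.Iic ζc) ζc ∧
    HasDerivWithinAt ρ (Real.exp (-2 * ζc)) (Set.Ici ζc) ζc ∧
    Real.exp (-2 * ζc) < 1 := by
  obtain ⟨hpos, hfix⟩ := hζc
  obtain rfl : ρ = fun x => min x (supercriticalDensity x) := funext hρ
  have hζ : supercriticalDensity ζc = ζc := by unfold supercriticalDensity; linarith
  have hleft : HasDerivWithinAt (fun x => min x (supercriticalDensity x)) 1 (Iic ζc) ζc := by
    refine (hasDerivWithinAt_id ζc _).min_of_eventually_le ?_ hζ.ge
    filter_upwards [self_mem_nhdsWithin, nhdsWithin_le_nhds (lt_mem_nhds hpos)] with x hxζ hx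
    exact le_supercriticalDensity hζ hx.le hxζ
  have hright := (hasDerivAt_supercriticalDensity ζc).hasDerivWithinAt.min_of_eventually_ge
    (eventually_nhdsWithin_of_forall fun x hx => supercriticalDensity_le hζ hpos.le hx) hζ.le
  have hlt : exp (-2 * ζc) < 1 := exp_lt_one_iff.2 (by linarith)
  exact ⟨(continuous_id.min continuous_supercriticalDensity).continuousOn,
    fun x _ y _ hxy => min_lt_min hxy (strictMono_supercriticalDensity hxy),
    not_differentiableAt_of_hasDerivWithinAt_Iic_Ici hleft hright hlt.ne', hleft, hright, hlt⟩
end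

section
/- The unique positive root λ* of λ = (5 + e^{-3λ})/3 is strictly greater than 5/3, and satisfies 1.6688 < λ* < 1.669. -/
/-!
Rewriting the equation as `3λ - e^{-3λ} = 5`, the root is the unique point where the strictly
increasing function `x ↦ 3x - e^{-3x}` takes the value `5`. Hence each bound reduces to evaluating
that function at `5/3`, `1.6688` and `1.669`, i.e. to comparing `e^{-5}`, `e^{-5.0064}` and
`e^{-5.007}` with `0`, `0.0064` and `0.007`; these follow from the bounds on `e^{-1}` in Mathlib
together with `e^{-0.0064} ≥ 1 - 0.0064`.
-/

open Real

lemma strictMono_mul_sub_exp_neg_mul {c : ℝ} (hc : 0 < c) :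
    StrictMono fun x : ℝ => c * x - exp (-c * x) := by
  intro x y hxy
  have : exp (-c * y) < exp (-c * x) := exp_lt_exp.2 (by nlinarith)
  dsimp only
  nlinarith

lemma exp_neg_five_eq_pow : exp (-5) = exp (-1) ^ 5 := by
  rw [← exp_nat_mul]
  norm_num

lemma exp_neg_five_gt : 0.0067 < exp (-5) := by
  rw [exp_neg_five_eq_pow]
  calc (0.0067 : ℝ) < 0.36787944116 ^ 5 := by norm_num
    _ < exp (-1) ^ 5 := pow_lt_pow_left₀ exp_neg_one_gt_d9 (by norm_num) (by norm_num)

lemma exp_neg_five_lt : exp (-5) < 0.007 := by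
  rw [exp_neg_five_eq_pow]
  calc exp (-1) ^ 5 < 0.3678794412 ^ 5 :=
        pow_lt_pow_left₀ exp_neg_one_lt_d9 (exp_pos _).le (by norm_num)
    _ < 0.007 := by norm_num

lemma exp_neg_five_sub_gt {t : ℝ} (ht : t < 1) : 0.0067 * (1 - t) < exp (-5 - t) := by
  have hsplit : exp (-5 - t) = exp (-5) * exp (-t) := by
    rw [← exp_add, sub_eq_add_neg]
  have hlin : 1 - t ≤ exp (-t) := by
    linarith [add_one_le_exp (-t)]
  rw [hsplit]
  nlinarith [exp_neg_five_gt]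

/-- The unique positive root λ* of λ = (5 + e^{-3λ})/3 is strictly greater than 5/3,
and satisfies 1.6688 < λ* < 1.669. -/
theorem flower_threshold_bounds (lamstar : ℝ)
    (h : 0 < lamstar ∧ lamstar = (5 + Real.exp (-3 * lamstar)) / 3) :
    5/3 < lamstar ∧ 1.6688 < lamstar ∧ lamstar < 1.669 := by
  set g : ℝ → ℝ := fun x => 3 * x - exp (-3 * x) with hg
  have hmono : StrictMono g := strictMono_mul_sub_exp_neg_mul three_pos
  have hroot : g lamstar = 5 := by
    simp only [hg]
    linarith [h.2]
  have hlow : g (5/3) < g lamstar := by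
    rw [hroot]
    norm_num [hg]
    exact exp_pos _
  have hmid : g 1.6688 < g lamstar := by
    have := exp_neg_five_sub_gt (t := 0.0064) (by norm_num)
    rw [hroot]
    norm_num [hg] at this ⊢
    linarith
  have hhigh : g lamstar < g 1.669 := by
    have := exp_lt_exp.2 (show (-5.007 : ℝ) < -5 by norm_num)
    rw [hroot]
    norm_num [hg]
    linarith [exp_neg_five_lt]
  exact ⟨hmono.lt_iff_lt.1 hlow, hmono.lt_iff_lt.1 hmid, hmono.lt_iff_lt.1 hhigh⟩
end

section
/- Abelian property of sandpiles: on a finite graph with sinks, any two maximal sequences of legal topplings starting from the same configuration have the same length, topple each vertex the same number of times, and reach the same final stable configuration. -/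
variable {V : Type*} [Fintype V] [DecidableEq V]

/-- Toppling at vertex `v`: remove `deg v` particles from `v` and send one along
each incident edge. -/
def topple (G : SimpleGraph V) [DecidableRel G.Adj] (c : V → ℕ) (v : V) : V → ℕ :=
  fun w => if w = v then c v - G.degree v else c w + (if G.Adj v w then 1 else 0)

/-- Result of performing the topplings listed in `L`, in order. -/
def runTopplings (G : SimpleGraph V) [DecidableRel G.Adj] (c : V → ℕ) : List V → (V → ℕ)
  | [] => c
  | v :: L => runTopplings G (topple G c v) L

/-- A sequence of topplings is legal (with sink set `S`) if each toppled vertex is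
a non-sink vertex that is unstable at the moment it topples. -/
def LegalSeq (G : SimpleGraph V) [DecidableRel G.Adj] (S : Set V) : (V → ℕ) → List V → Prop
  | _, [] => True
  | c, v :: L => v ∉ S ∧ G.degree v ≤ c v ∧ LegalSeq G S (topple G c v) L

/-- A configuration is stable if every non-sink vertex has fewer particles than its degree. -/
def StableConf (G : SimpleGraph V) [DecidableRel G.Adj] (S : Set V) (c : V → ℕ) : Prop :=
  ∀ v, v ∉ S → c v < G.degree v

/-!
Toppling a vertex only adds particles to the other vertices, so an unstable non-sink vertex
stays unstable until it is itself toppled; in particular every legal sequence ending in a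
stable configuration topples it at some point. Two legal topplings at distinct vertices
commute, so that toppling can be moved to the front of the sequence without changing
legality or the final configuration. Inducting on the length of one sequence, any two such
sequences are permutations of each other with the same final configuration.
-/

section Sandpile

variable (G : SimpleGraph V) [DecidableRel G.Adj]

@[simp]
lemma runTopplings_cons (c : V → ℕ) (v : V) (L : List V) :
    runTopplings G c (v :: L) = runTopplings G (topple G c v) L :=
  rfl

lemma le_topple_of_ne (c : V → ℕ) {v w : V} (hwv : w ≠ v) : c w ≤ topple G c v w := by
  simp [topple, hwv]

-- The instability hypotheses keep the truncated subtractions in `topple` exact.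
lemma topple_topple_comm (c : V → ℕ) {v w : V} (hvw : v ≠ w)
    (hv : G.degree v ≤ c v) (hw : G.degree w ≤ c w) :
    topple G (topple G c v) w = topple G (topple G c w) v := by
  funext x
  simp only [topple]
  split_ifs <;> subst_vars <;> simp_all <;> omega

variable {G} {S : Set V}

lemma LegalSeq.exists_perm_cons_of_stable {c : V → ℕ} {L : List V}
    (hL : LegalSeq G S c L) (hs : StableConf G S (runTopplings G c L)) {v : V}
    (hvS : v ∉ S) (hv : G.degree v ≤ c v) :
    ∃ L', LegalSeq G S (topple G c v) L' ∧ L.Perm (v :: L') ∧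
      runTopplings G (topple G c v) L' = runTopplings G c L := by
  induction L generalizing c with
  | nil => exact absurd hv (hs v hvS).not_ge
  | cons w M ih =>
    obtain ⟨hwS, hw, hM⟩ := hL
    by_cases hwv : w = v
    · subst hwv
      exact ⟨M, hM, .refl _, rfl⟩
    have hv' : G.degree v ≤ topple G c w v := hv.trans (le_topple_of_ne G c (Ne.symm hwv))
    have hw' : G.degree w ≤ topple G c v w := hw.trans (le_topple_of_ne G c hwv)
    obtain ⟨M', hM', hperm, hrun⟩ := ih hM hs hv'
    have hcomm := topple_topple_comm G c (Ne.symm hwv) hv hw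
    refine ⟨w :: M', ⟨hwS, hw', ?_⟩, (hperm.cons w).trans (.swap v w M'), ?_⟩
    · rwa [hcomm]
    · rwa [runTopplings_cons, hcomm]

lemma LegalSeq.perm_of_stable {c : V → ℕ} {L₁ L₂ : List V}
    (h₁ : LegalSeq G S c L₁) (h₂ : LegalSeq G S c L₂)
    (hs₁ : StableConf G S (runTopplings G c L₁))
    (hs₂ : StableConf G S (runTopplings G c L₂)) :
    L₁.Perm L₂ ∧ runTopplings G c L₁ = runTopplings G c L₂ := by
  induction L₁ generalizing c L₂ with
  | nil =>
    cases L₂ with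
    | nil => exact ⟨.refl _, rfl⟩
    | cons w M => exact absurd h₂.2.1 (hs₁ w h₂.1).not_ge
  | cons v T ih =>
    obtain ⟨hvS, hv, hT⟩ := h₁
    obtain ⟨L', hL', hperm, hrun⟩ := h₂.exists_perm_cons_of_stable hs₂ hvS hv
    obtain ⟨hpermT, hrunT⟩ := ih hT hL' hs₁ (hrun ▸ hs₂)
    exact ⟨(hpermT.cons v).trans hperm.symm, hrunT.trans hrun⟩

end Sandpile

/-- Abelian property of sandpiles: any two legal toppling sequences from the same
configuration that both terminate in stable configurations have the same length,
topple each vertex the same number of times, and reach the same final stable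
configuration. -/
theorem abelian_property (G : SimpleGraph V) [DecidableRel G.Adj] (S : Set V)
    (c : V → ℕ) (L₁ L₂ : List V)
    (h₁ : LegalSeq G S c L₁) (h₂ : LegalSeq G S c L₂)
    (hs₁ : StableConf G S (runTopplings G c L₁))
    (hs₂ : StableConf G S (runTopplings G c L₂)) :
    L₁.length = L₂.length ∧ (∀ v, L₁.count v = L₂.count v) ∧
      runTopplings G c L₁ = runTopplings G c L₂ := by
  obtain ⟨hperm, hrun⟩ := h₁.perm_of_stable h₂ hs₁ hs₂
  exact ⟨hperm.length_eq, fun v => hperm.count_eq v, hrun⟩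
end

section
/- On the flower graph, for each petal consisting of two vertices u, v, the difference (number of particles at u) − (number of particles at v) modulo 3 is invariant under all topplings. -/
/-- Vertices of the flower graph with `n` petals: `none` is the central vertex and
`some (i, b)` are the two vertices of petal `i`. Each petal is a pair of vertices
joined to each other and to the center. -/
abbrev FlowerV (n : ℕ) := Option (Fin n × Bool)

/-- Toppling at vertex `x` of the flower graph, evaluated at `w`.  A petal vertex
(degree 2) sends one particle to its petal partner and one to the center; the
center (degree 2n) sends one particle to every petal vertex. -/
def flowerTopple (n : ℕ) (c : FlowerV n → ℕ) : FlowerV n → FlowerV n → ℕ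
  | some (i, b), w =>
      if w = some (i, b) then c w - 2
      else if w = some (i, !b) ∨ w = none then c w + 1
      else c w
  | none, w =>
      if w = none then c w - 2 * n else c w + 1

/-! Every toppling shifts the two vertices of a petal by the same amount modulo 3.
The center and the vertices of other petals shift them by `1` and `0` respectively;
a vertex of the petal itself gains `1` at its partner and loses `2 ≡ 1` itself. -/

theorem ZMod.natCast_sub_two_three {a : ℕ} (ha : 2 ≤ a) :
    ((a - 2 : ℕ) : ZMod 3) = a + 1 := by
  rw [Nat.cast_sub ha, Nat.cast_ofNat, sub_eq_add_neg, show (-2 : ZMod 3) = 1 from rfl]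

section FlowerTopple

variable {n : ℕ} (c : FlowerV n → ℕ)

theorem flowerTopple_none_some (p : Fin n × Bool) :
    flowerTopple n c none (some p) = c (some p) + 1 := by
  simp [flowerTopple]

theorem flowerTopple_some_of_ne {i j : Fin n} (hji : j ≠ i) (b b' : Bool) :
    flowerTopple n c (some (j, b)) (some (i, b')) = c (some (i, b')) := by
  simp [flowerTopple, hji.symm]

theorem flowerTopple_same_petal_cast {i : Fin n} {b : Bool} (hc : 2 ≤ c (some (i, b)))
    (b' : Bool) :
    (flowerTopple n c (some (i, b)) (some (i, b')) : ZMod 3) = c (some (i, b')) + 1 := by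
  rcases Bool.eq_or_eq_not b' b with rfl | rfl
  · simp [flowerTopple, ZMod.natCast_sub_two_three hc]
  · simp [flowerTopple]

theorem exists_flowerTopple_petal_cast_eq_add {x : FlowerV n}
    (hx : if x = none then 2 * n ≤ c x else 2 ≤ c x) (i : Fin n) :
    ∃ k : ZMod 3, ∀ b : Bool,
      (flowerTopple n c x (some (i, b)) : ZMod 3) = c (some (i, b)) + k := by
  rcases x with _ | ⟨j, b⟩
  · exact ⟨1, fun b' => by simp [flowerTopple_none_some]⟩
  by_cases hji : j = i
  · subst hji
    exact ⟨1, flowerTopple_same_petal_cast c (by simpa using hx)⟩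
  · exact ⟨0, fun b' => by simp [flowerTopple_some_of_ne c hji]⟩

end FlowerTopple

/-- On the flower graph, for each petal with vertices `u = some (i, true)` and
`v = some (i, false)`, the difference (particles at `u`) − (particles at `v`)
modulo 3 is invariant under all topplings. -/
theorem flower_mod_three_invariant (n : ℕ) (c : FlowerV n → ℕ) (x : FlowerV n)
    (hx : if x = none then 2 * n ≤ c x else 2 ≤ c x) :
    ∀ i : Fin n,
      ((flowerTopple n c x (some (i, true)) : ZMod 3) -
        (flowerTopple n c x (some (i, false)) : ZMod 3)) =
      ((c (some (i, true)) : ZMod 3) - (c (some (i, false)) : ZMod 3)) := by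
  intro i
  obtain ⟨k, hk⟩ := exists_flowerTopple_petal_cast_eq_add c hx i
  rw [hk, hk]
  ring
end

section
/- The minimum number of particles in a recurrent configuration on the complete graph K_n (with one vertex as sink) is (n-1)(n-2)/2 and the maximum is (n-1)(n-2); hence the minimum density of a recurrent configuration is (n-2)/2 and the maximum density is n-2, where density is total particles divided by the n-1 non-sink vertices. -/
open Finset

/-- A sandpile configuration on the complete graph `K_n` with one sink: the `n − 1`
non-sink vertices carry `c v` particles.  It is stable if every non-sink vertex
holds at most `n − 2` particles, and recurrent if moreover it passes Dhar's burning
test: for every nonempty set `S` of non-sink vertices, some vertex of `S` holds at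
least as many particles as its number of neighbors within `S` (which in `K_n` is
`|S| − 1`). -/
def KRecurrent (n : ℕ) (c : Fin (n - 1) → ℕ) : Prop :=
  (∀ v, c v ≤ n - 2) ∧
  ∀ S : Finset (Fin (n - 1)), S.Nonempty → ∃ v ∈ S, S.card - 1 ≤ c v

/-!
The burning test applied to `S` yields a vertex carrying at least `|S| − 1` particles;
removing it and inducting shows that `S` carries at least `(|S| − 1) + (|S| − 2) + ⋯ + 0`
particles. The staircase `v ↦ v` attains this bound, and the constant configuration `n − 2`
attains the upper bound `(n − 1)(n − 2)` forced by stability.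
-/

theorem Finset.card_mul_card_sub_one_le_two_mul_sum {ι : Type*} [DecidableEq ι]
    (c : ι → ℕ) (S : Finset ι) (h : ∀ T ⊆ S, T.Nonempty → ∃ v ∈ T, #T - 1 ≤ c v) :
    #S * (#S - 1) ≤ 2 * ∑ v ∈ S, c v := by
  induction S using Finset.strongInduction with
  | H S ih =>
    obtain rfl | hS := S.eq_empty_or_nonempty
    · simp
    obtain ⟨v, hv, hcv⟩ := h S subset_rfl hS
    have hrest := ih (S.erase v) (erase_ssubset hv) fun T hT => h T (hT.trans (erase_subset v S))
    rw [card_erase_of_mem hv] at hrest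
    rw [← add_sum_erase S c hv]
    obtain ⟨m, hm⟩ : ∃ m, #S = m + 1 := ⟨#S - 1, by have := hS.card_pos; omega⟩
    simp only [hm, Nat.add_sub_cancel] at hcv hrest ⊢
    have hstep : (m + 1) * m = m * (m - 1) + 2 * m := by
      cases m with
      | zero => rfl
      | succ k => rw [Nat.add_sub_cancel]; ring
    omega

theorem exists_mem_card_sub_one_le_of_injOn {ι : Type*} {c : ι → ℕ} {S : Finset ι}
    (hc : Set.InjOn c S) (hS : S.Nonempty) :
    ∃ v ∈ S, #S - 1 ≤ c v := by
  by_contra! hlt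
  have hsub : S.image c ⊆ range (#S - 1) := fun x hx => by
    obtain ⟨v, hv, rfl⟩ := mem_image.mp hx
    exact mem_range.mpr (hlt v hv)
  have := card_le_card hsub
  rw [card_image_of_injOn hc, card_range] at this
  have := hS.card_pos
  omega

namespace KRecurrent

variable {n : ℕ} {c : Fin (n - 1) → ℕ}

theorem mul_le_two_mul_sum (hc : KRecurrent n c) : (n - 1) * (n - 2) ≤ 2 * ∑ v, c v := by
  have := card_mul_card_sub_one_le_two_mul_sum c univ fun T _ hT => hc.2 T hT
  rwa [card_univ, Fintype.card_fin, Nat.sub_sub] at this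

theorem sum_le (hc : KRecurrent n c) : ∑ v, c v ≤ (n - 1) * (n - 2) := by
  simpa using sum_le_card_nsmul univ c (n - 2) fun v _ => hc.1 v

end KRecurrent

theorem kRecurrent_val (n : ℕ) : KRecurrent n fun v => (v : ℕ) :=
  ⟨fun v => Nat.le_pred_of_lt v.isLt,
    fun _ hS => exists_mem_card_sub_one_le_of_injOn Fin.val_injective.injOn hS⟩

theorem kRecurrent_const (n : ℕ) : KRecurrent n fun _ => n - 2 := by
  refine ⟨fun _ => le_rfl, fun S ⟨v, hv⟩ => ⟨v, hv, ?_⟩⟩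
  have := card_le_univ S
  rw [Fintype.card_fin] at this
  dsimp only
  omega

theorem sum_fin_val (n : ℕ) : ∑ v : Fin (n - 1), (v : ℕ) = (n - 1) * (n - 2) / 2 := by
  rw [Fin.sum_univ_eq_sum_range (fun i => i), sum_range_id, Nat.sub_sub]

theorem cast_sub_one_mul_sub_two {n : ℕ} (hn : 2 ≤ n) :
    (((n - 1) * (n - 2) : ℕ) : ℚ) = (n - 1) * (n - 2) := by
  push_cast [Nat.cast_sub (by omega : 1 ≤ n), Nat.cast_sub hn]
  ring

theorem cast_sub_one_mul_sub_two_div_two {n : ℕ} (hn : 2 ≤ n) :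
    (((n - 1) * (n - 2) / 2 : ℕ) : ℚ) = (n - 1) * (n - 2) / 2 := by
  have heven : 2 ∣ (n - 1) * (n - 2) := by
    simpa [Nat.sub_sub] using (Nat.even_mul_pred_self (n - 1)).two_dvd
  rw [Nat.cast_div heven (by norm_num), cast_sub_one_mul_sub_two hn, Nat.cast_ofNat]

/-- On `K_n` with one sink, the minimum number of particles in a recurrent
configuration is `(n−1)(n−2)/2` and the maximum is `(n−1)(n−2)`; hence the minimum
density (total particles divided by the `n − 1` non-sink vertices) is `(n−2)/2`
and the maximum density is `n − 2`. -/
theorem complete_graph_recurrent_extremes (n : ℕ) (hn : 2 ≤ n) :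
    IsLeast {t : ℕ | ∃ c : Fin (n - 1) → ℕ, KRecurrent n c ∧ t = ∑ v, c v}
      ((n - 1) * (n - 2) / 2) ∧
    IsGreatest {t : ℕ | ∃ c : Fin (n - 1) → ℕ, KRecurrent n c ∧ t = ∑ v, c v}
      ((n - 1) * (n - 2)) ∧
    IsLeast {q : ℚ | ∃ c : Fin (n - 1) → ℕ, KRecurrent n c ∧
        q = (∑ v, (c v : ℚ)) / (n - 1)} (((n : ℚ) - 2) / 2) ∧
    IsGreatest {q : ℚ | ∃ c : Fin (n - 1) → ℕ, KRecurrent n c ∧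
        q = (∑ v, (c v : ℚ)) / (n - 1)} ((n : ℚ) - 2) := by
  set counts := {t : ℕ | ∃ c : Fin (n - 1) → ℕ, KRecurrent n c ∧ t = ∑ v, c v}
  have hmin : IsLeast counts ((n - 1) * (n - 2) / 2) :=
    ⟨⟨_, kRecurrent_val n, (sum_fin_val n).symm⟩, by
      rintro _ ⟨c, hc, rfl⟩
      exact Nat.div_le_of_le_mul hc.mul_le_two_mul_sum⟩
  have hmax : IsGreatest counts ((n - 1) * (n - 2)) :=
    ⟨⟨_, kRecurrent_const n, by simp⟩, by
      rintro _ ⟨c, hc, rfl⟩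
      exact hc.sum_le⟩
  have hpos : (0 : ℚ) < n - 1 := sub_pos.mpr (by exact_mod_cast hn)
  have hdensity : Monotone fun t : ℕ => (t : ℚ) / (n - 1) := fun _ _ h =>
    div_le_div_of_nonneg_right (by exact_mod_cast h) hpos.le
  have himage : {q : ℚ | ∃ c : Fin (n - 1) → ℕ, KRecurrent n c ∧
      q = (∑ v, (c v : ℚ)) / (n - 1)} = (fun t : ℕ => (t : ℚ) / (n - 1)) '' counts := by
    ext q
    simp [counts, eq_comm]
  have hmin_density : ((n : ℚ) - 2) / 2 = (((n - 1) * (n - 2) / 2 : ℕ) : ℚ) / (n - 1) := by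
    rw [cast_sub_one_mul_sub_two_div_two hn]
    field_simp
  have hmax_density : (n : ℚ) - 2 = (((n - 1) * (n - 2) : ℕ) : ℚ) / (n - 1) := by
    rw [cast_sub_one_mul_sub_two hn]
    field_simp
  rw [himage, hmin_density, hmax_density]
  exact ⟨hmin, hmax, hdensity.map_isLeast hmin, hdensity.map_isGreatest hmax⟩
end
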